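/- Let K = {(z_1,z_2) ∈ ℂ² : |z_1|² + |z_2|² ≤ 1} be the closed Euclidean unit ball in ℂ² and let α ∈ ℕ² with |α| = d ≥ 1. Then every polynomial P in the monic class 𝒫(α) satisfies sup_{z∈K} |P(z)| ≥ (√2/2)^d = 2^{−d/2}. -/

import Mathlib

/-! Averaging `P` against the characters of a grid of `N`-th roots of unity (with `N` above every
exponent of `P`) on the torus `|z₁| = |z₂| = 1/√2` picks out the single coefficient of `z ^ α`,
which gives Cauchy's estimate `|c_α| 2^{-d/2} ≤ ‖P‖_K`; the torus lies in the ball and `c_α = 1`. -/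

open MvPolynomial Filter

noncomputable section

/-- `Prec β α` : the multi-index `β` precedes `α` in the graded ordering of the paper:
either `|β| < |α|`, or `|β| = |α|`, `β ≠ α`, and at the smallest index `l` with
`β l ≠ α l` one has `α l < β l`. -/
def Prec {n : ℕ} (β α : Fin n →₀ ℕ) : Prop :=
  (∑ j, β j) < (∑ j, α j) ∨
    ((∑ j, β j) = (∑ j, α j) ∧
      ∃ l : Fin n, (∀ m, m < l → β m = α m) ∧ α l < β l)

/-- The monic class `𝒫(α)`: polynomials of the form `z ^ α + ∑_{β ≺ α} c_β z ^ β`. -/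
def MonicClass {n : ℕ} (α : Fin n →₀ ℕ) (P : MvPolynomial (Fin n) ℂ) : Prop :=
  P.coeff α = 1 ∧ ∀ β : Fin n →₀ ℕ, β ≠ α → P.coeff β ≠ 0 → Prec β α

/-- The sup-norm `‖P‖_K = sup_{z ∈ K} |P(z)|` of a polynomial on a set `K ⊆ ℂⁿ`. -/
def supNorm {n : ℕ} (K : Set (Fin n → ℂ)) (P : MvPolynomial (Fin n) ℂ) : ℝ :=
  sSup ((fun z => ‖eval z P‖) '' K)

/-- The Chebyshev number `t_K(α) = inf {‖P‖_K : P ∈ 𝒫(α)}`. -/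
def chebNumber {n : ℕ} (K : Set (Fin n → ℂ)) (α : Fin n →₀ ℕ) : ℝ :=
  sInf (supNorm K '' {P | MonicClass α P})

/-- `τ⁻(K)`: the liminf of `t_K(α) ^ (1/|α|)` along the cofinite filter on the
multi-indices `α` with `|α| ≥ 1`. -/
def tauMinus {n : ℕ} (K : Set (Fin n → ℂ)) : ℝ :=
  liminf (fun α : {α : Fin n →₀ ℕ // 1 ≤ ∑ j, α j} =>
    chebNumber K α.1 ^ ((1 : ℝ) / (∑ j, α.1 j : ℕ))) cofinite

theorem IsPrimitiveRoot.sum_inv_pow_mul_pow {K : Type*} [Field K] {ζ : K} {N : ℕ}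
    (hζ : IsPrimitiveRoot ζ N) {a b : ℕ} (ha : a < N) (hb : b < N) :
    ∑ j : Fin N, ζ⁻¹ ^ (j * a : ℕ) * ζ ^ (j * b : ℕ) = if a = b then (N : K) else 0 := by
  have hζ0 : ζ ≠ 0 := hζ.ne_zero (by omega)
  have hterm (j : ℕ) : ζ⁻¹ ^ (j * a) * ζ ^ (j * b) = (ζ ^ b / ζ ^ a) ^ j := by
    rw [div_pow, inv_pow, ← pow_mul, ← pow_mul, mul_comm b, mul_comm a, div_eq_inv_mul]
  simp only [hterm]
  rw [Fin.sum_univ_eq_sum_range (fun j => (ζ ^ b / ζ ^ a) ^ j)]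
  split_ifs with hab
  · simp [hab, div_self (pow_ne_zero b hζ0)]
  · have hne : ζ ^ b / ζ ^ a ≠ 1 :=
      fun h => hab (hζ.pow_inj ha hb (div_eq_one_iff_eq (pow_ne_zero a hζ0) |>.mp h).symm)
    have hpow : (ζ ^ b / ζ ^ a) ^ N = 1 := by
      rw [div_pow, ← pow_mul, ← pow_mul, pow_mul', pow_mul' ζ a, hζ.pow_eq_one, one_pow, one_pow,
        div_one]
    rw [geom_sum_eq hne, hpow, sub_self, zero_div]

theorem MvPolynomial.sum_weighted_eval_rootsOfUnity_eq_coeff {σ K : Type*} [Fintype σ]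
    [DecidableEq σ] [Field K] {ζ : K} {N : ℕ} (hζ : IsPrimitiveRoot ζ N) (P : MvPolynomial σ K)
    (α : σ →₀ ℕ) (hα : ∀ i, α i < N) (hP : ∀ β ∈ P.support, ∀ i, β i < N) (c : σ → K) :
    ∑ k : σ → Fin N, (∏ i, ζ⁻¹ ^ (k i * α i : ℕ)) * eval (fun i => c i * ζ ^ (k i : ℕ)) P =
      (N : K) ^ Fintype.card σ * (P.coeff α * ∏ i, c i ^ α i) := by
  calc ∑ k : σ → Fin N, (∏ i, ζ⁻¹ ^ (k i * α i : ℕ)) * eval (fun i => c i * ζ ^ (k i : ℕ)) P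
      = ∑ k : σ → Fin N, ∑ β ∈ P.support, P.coeff β * (∏ i, c i ^ β i) *
          ∏ i, ζ⁻¹ ^ (k i * α i : ℕ) * ζ ^ (k i * β i : ℕ) := by
        refine Finset.sum_congr rfl fun k _ => ?_
        simp only [eval_eq', Finset.mul_sum, mul_pow, pow_mul, Finset.prod_mul_distrib]
        exact Finset.sum_congr rfl fun β _ => by ring
    _ = ∑ β ∈ P.support, P.coeff β * (∏ i, c i ^ β i) *
          ∏ i, ∑ j : Fin N, ζ⁻¹ ^ (j * α i : ℕ) * ζ ^ (j * β i : ℕ) := by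
        rw [Finset.sum_comm]
        simp only [Fintype.prod_sum, Finset.mul_sum]
    _ = ∑ β ∈ P.support, P.coeff β * (∏ i, c i ^ β i) *
          if α = β then (N : K) ^ Fintype.card σ else 0 := by
        refine Finset.sum_congr rfl fun β hβ => ?_
        simp only [hζ.sum_inv_pow_mul_pow (hα _) (hP β hβ _), Finset.prod_ite_zero,
          Finset.prod_const, Finset.card_univ, Finset.mem_univ, true_imp_iff,
          ← DFunLike.ext_iff]
    _ = (N : K) ^ Fintype.card σ * (P.coeff α * ∏ i, c i ^ α i) := by
        simp only [mul_ite, mul_zero, Finset.sum_ite_eq]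
        split_ifs with hα
        · ring
        · simp [notMem_support_iff.mp hα]

theorem MvPolynomial.norm_coeff_mul_prod_pow_le {σ : Type*} [Fintype σ] (P : MvPolynomial σ ℂ)
    (α : σ →₀ ℕ) {r : σ → ℝ} (hr : ∀ i, 0 ≤ r i) {M : ℝ}
    (hM : ∀ z : σ → ℂ, (∀ i, ‖z i‖ = r i) → ‖eval z P‖ ≤ M) :
    ‖P.coeff α‖ * ∏ i, r i ^ α i ≤ M := by
  classical
  set N := P.totalDegree + α.degree + 1
  have hN : N ≠ 0 := Nat.succ_ne_zero _
  have hζ := Complex.isPrimitiveRoot_exp N hN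
  set ζ := Complex.exp (2 * Real.pi * Complex.I / N)
  have hζ_norm : ‖ζ‖ = 1 := Complex.norm_eq_one_of_pow_eq_one hζ.pow_eq_one hN
  have hα (i : σ) : α i < N := (α.le_degree i).trans_lt (by omega)
  have hP : ∀ β ∈ P.support, ∀ i, β i < N := fun β hβ i =>
    ((monomial_le_degreeOf i hβ).trans (degreeOf_le_totalDegree P i)).trans_lt (by omega)
  have hr_norm (i : σ) : ‖(r i : ℂ)‖ = r i := by rw [Complex.norm_real, Real.norm_of_nonneg (hr i)]
  refine le_of_mul_le_mul_left ?_ (by positivity : (0 : ℝ) < (N : ℝ) ^ Fintype.card σ)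
  calc (N : ℝ) ^ Fintype.card σ * (‖P.coeff α‖ * ∏ i, r i ^ α i)
      = ‖(N : ℂ) ^ Fintype.card σ * (P.coeff α * ∏ i, (r i : ℂ) ^ α i)‖ := by
        simp only [norm_mul, norm_pow, norm_prod, Complex.norm_natCast, hr_norm]
    _ = ‖∑ k : σ → Fin N, (∏ i, ζ⁻¹ ^ (k i * α i : ℕ)) *
          eval (fun i => (r i : ℂ) * ζ ^ (k i : ℕ)) P‖ := by
        rw [sum_weighted_eval_rootsOfUnity_eq_coeff hζ P α hα hP]
    _ ≤ ∑ k : σ → Fin N, ‖(∏ i, ζ⁻¹ ^ (k i * α i : ℕ)) *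
          eval (fun i => (r i : ℂ) * ζ ^ (k i : ℕ)) P‖ := norm_sum_le _ _
    _ ≤ ∑ _k : σ → Fin N, M := by
        refine Finset.sum_le_sum fun k _ => ?_
        rw [norm_mul, norm_prod, Finset.prod_eq_one fun i _ => by simp [hζ_norm], one_mul]
        exact hM _ fun i => by simp only [norm_mul, norm_pow, hζ_norm, one_pow, mul_one, hr_norm]
    _ = (N : ℝ) ^ Fintype.card σ * M := by simp

theorem norm_eval_le_supNorm {n : ℕ} {K : Set (Fin n → ℂ)} (hK : Bornology.IsBounded K)
    (P : MvPolynomial (Fin n) ℂ) {z : Fin n → ℂ} (hz : z ∈ K) : ‖eval z P‖ ≤ supNorm K P := by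
  have hbdd : BddAbove ((fun z => ‖eval z P‖) '' closure K) :=
    (hK.isCompact_closure.image (continuous_norm.comp (continuous_eval P))).bddAbove
  exact le_csSup (hbdd.mono (Set.image_mono subset_closure)) ⟨z, hz, rfl⟩

theorem euclidean_ball_cheb_lower_general {d : ℕ} (α : Fin 2 →₀ ℕ)
    (hα : ∑ j, α j = d)
    (P : MvPolynomial (Fin 2) ℂ) (hP : MonicClass α P) :
    supNorm {z : Fin 2 → ℂ | ‖z 0‖ ^ 2 + ‖z 1‖ ^ 2 ≤ 1} P ≥
      (Real.sqrt 2 / 2) ^ d := by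
  set K : Set (Fin 2 → ℂ) := {z | ‖z 0‖ ^ 2 + ‖z 1‖ ^ 2 ≤ 1}
  have hK : Bornology.IsBounded K := by
    refine (Metric.isBounded_closedBall (x := 0) (r := 1)).subset fun z hz => ?_
    rw [mem_closedBall_zero_iff, pi_norm_le_iff_of_nonneg zero_le_one, Fin.forall_fin_two]
    have hz : ‖z 0‖ ^ 2 + ‖z 1‖ ^ 2 ≤ 1 := hz
    constructor <;> nlinarith [norm_nonneg (z 0), norm_nonneg (z 1)]
  have hr : (Real.sqrt 2 / 2) ^ 2 + (Real.sqrt 2 / 2) ^ 2 = 1 := by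
    rw [div_pow, Real.sq_sqrt zero_le_two]; norm_num
  have hcauchy := P.norm_coeff_mul_prod_pow_le α (r := fun _ => Real.sqrt 2 / 2)
    (fun _ => by positivity) (M := supNorm K P) fun z hz =>
      norm_eval_le_supNorm hK P (show ‖z 0‖ ^ 2 + ‖z 1‖ ^ 2 ≤ 1 by rw [hz 0, hz 1, hr])
  rwa [hP.1, norm_one, one_mul, Finset.prod_pow_eq_pow_sum, hα] at hcauchy

/-- on the closed Euclidean unit ball of `ℂ²`, every `P ∈ 𝒫(α)` with
`|α| = d ≥ 1` satisfies `‖P‖_K ≥ (√2/2)^d`. -/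
theorem euclidean_ball_cheb_lower {d : ℕ} (hd1 : 1 ≤ d) (α : Fin 2 →₀ ℕ)
    (hα : ∑ j, α j = d)
    (P : MvPolynomial (Fin 2) ℂ) (hP : MonicClass α P) :
    supNorm {z : Fin 2 → ℂ | ‖z 0‖ ^ 2 + ‖z 1‖ ^ 2 ≤ 1} P ≥
      (Real.sqrt 2 / 2) ^ d :=
  euclidean_ball_cheb_lower_general α hα P hP
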